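/- For all square-integrable real random variables x̂₁, ŷ₁, ŷ₂ on (Ω, F, P) one has E[ −b(1−γ)A_k² x̂₁² − (b γ A_k²/2)·E[x̂₁|G]·x̂₁ − (κ_f²/c₁₂ + κ_g²/c₂₂) ŷ₁² + 2(κ_f κ_e / c₁₂) ŷ₁ ŷ₂ − (2(η+ν) + κ_e²/c₁₂) ŷ₂² + ν·E[ŷ₂|G]·ŷ₂ ] ≤ −β₂ · E[ ŷ₁² + ŷ₂² ], where β₂ := min( κ_f²/c₁₂ + κ_g²/c₂₂ − κ_f κ_e/c₁₂ , 2η + ν + κ_e²/c₁₂ − κ_f κ_e/c₁₂ ) > 0. (This is the monotonicity condition, with β₁ = 0 and the above β₂, which by Peng–Wu's continuation method yields global solvability of the McKean–Vlasov FBSDE of the model.) -/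

import Mathlib

/-!
The `x̂₁`-terms are nonpositive because `E[E[x̂₁|G] x̂₁] = E[E[x̂₁|G]²] ≥ 0`, and the same identity
together with `2uv ≤ u² + v²` gives `E[E[ŷ₂|G] ŷ₂] ≤ E[ŷ₂²]`, so the `ν`-terms cost at most
`−ν E[ŷ₂²]`. What remains is the quadratic form
`−(κ_f²/c₁₂ + κ_g²/c₂₂) ŷ₁² + 2(κ_f κ_e/c₁₂) ŷ₁ ŷ₂ − (2η + ν + κ_e²/c₁₂) ŷ₂²`, and bounding its cross
term by `(κ_f κ_e/c₁₂)(ŷ₁² + ŷ₂²)` leaves exactly the two diagonal coefficients whose minimum is `β₂`.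
-/

open MeasureTheory

section

variable {Ω : Type*} {m mΩ : MeasurableSpace Ω} {μ : Measure Ω}

lemma two_mul_integral_mul_le_integral_sq_add_integral_sq {f g : Ω → ℝ}
    (hf : MemLp f 2 μ) (hg : MemLp g 2 μ) :
    2 * ∫ ω, f ω * g ω ∂μ ≤ ∫ ω, f ω ^ 2 ∂μ + ∫ ω, g ω ^ 2 ∂μ := by
  rw [← integral_const_mul, ← integral_add hf.integrable_sq hg.integrable_sq]
  refine integral_mono ((hf.integrable_mul hg).const_mul 2) (hf.integrable_sq.add hg.integrable_sq)
    fun ω => ?_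
  simpa only [mul_assoc] using two_mul_le_add_sq (f ω) (g ω)

variable [IsFiniteMeasure μ]

lemma integral_condExp_mul_eq_integral_condExp_sq (hm : m ≤ mΩ) {f : Ω → ℝ}
    (hf : MemLp f 2 μ) :
    ∫ ω, (μ[f|m]) ω * f ω ∂μ = ∫ ω, (μ[f|m]) ω ^ 2 ∂μ := by
  have hpull : μ[μ[f|m] * f|m] =ᵐ[μ] μ[f|m] * μ[f|m] :=
    condExp_mul_of_stronglyMeasurable_left stronglyMeasurable_condExp
      ((hf.condExp one_le_two).integrable_mul hf) (hf.integrable one_le_two)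
  calc ∫ ω, (μ[f|m]) ω * f ω ∂μ = ∫ ω, (μ[μ[f|m] * f|m]) ω ∂μ := (integral_condExp hm).symm
    _ = ∫ ω, (μ[f|m]) ω ^ 2 ∂μ := integral_congr_ae <| by
      filter_upwards [hpull] with ω h
      rw [h, Pi.mul_apply, sq]

lemma integral_condExp_mul_nonneg (hm : m ≤ mΩ) {f : Ω → ℝ} (hf : MemLp f 2 μ) :
    0 ≤ ∫ ω, (μ[f|m]) ω * f ω ∂μ := by
  rw [integral_condExp_mul_eq_integral_condExp_sq hm hf]
  exact integral_nonneg fun ω => sq_nonneg _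

lemma integral_condExp_mul_le_integral_sq (hm : m ≤ mΩ) {f : Ω → ℝ} (hf : MemLp f 2 μ) :
    ∫ ω, (μ[f|m]) ω * f ω ∂μ ≤ ∫ ω, f ω ^ 2 ∂μ := by
  have h := two_mul_integral_mul_le_integral_sq_add_integral_sq (hf.condExp (m := m) one_le_two) hf
  rw [← integral_condExp_mul_eq_integral_condExp_sq hm hf] at h
  linarith

end

theorem stmt_2_general
    {Ω : Type*} [mΩ : MeasurableSpace Ω] (P : Measure Ω) [IsProbabilityMeasure P]
    (G : MeasurableSpace Ω) (hG : G ≤ mΩ)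
    (b γ Ak κf κg κe c12 c22 η ν : ℝ)
    (hb : 0 ≤ b) (hγ0 : 0 ≤ γ) (hγ1 : γ ≤ 1)
    (hκf : 0 < κf) (hκe : 0 < κe)
    (hc12 : 0 < c12) (hν : 0 < ν)
    (hstruct1 : 0 < κf ^ 2 / c12 + κg ^ 2 / c22 - κf * κe / c12)
    (hstruct2 : 0 < 2 * η + ν + κe ^ 2 / c12 - κf * κe / c12)
    (x1 y1 y2 : Ω → ℝ)
    (hx1 : MemLp x1 2 P) (hy1 : MemLp y1 2 P) (hy2 : MemLp y2 2 P) :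
    0 < min (κf ^ 2 / c12 + κg ^ 2 / c22 - κf * κe / c12)
        (2 * η + ν + κe ^ 2 / c12 - κf * κe / c12) ∧
    ∫ ω, (-(b * (1 - γ) * Ak ^ 2) * (x1 ω) ^ 2
        - b * γ * Ak ^ 2 / 2 * ((P[x1 | G]) ω) * x1 ω
        - (κf ^ 2 / c12 + κg ^ 2 / c22) * (y1 ω) ^ 2
        + 2 * (κf * κe / c12) * (y1 ω) * (y2 ω)
        - (2 * (η + ν) + κe ^ 2 / c12) * (y2 ω) ^ 2
        + ν * ((P[y2 | G]) ω) * (y2 ω)) ∂P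
      ≤ - min (κf ^ 2 / c12 + κg ^ 2 / c22 - κf * κe / c12)
            (2 * η + ν + κe ^ 2 / c12 - κf * κe / c12)
          * ∫ ω, ((y1 ω) ^ 2 + (y2 ω) ^ 2) ∂P := by
  refine ⟨lt_min hstruct1 hstruct2, ?_⟩
  set β := min (κf ^ 2 / c12 + κg ^ 2 / c22 - κf * κe / c12)
    (2 * η + ν + κe ^ 2 / c12 - κf * κe / c12)
  have hx1sq := hx1.integrable_sq
  have hy1sq := hy1.integrable_sq
  have hy2sq := hy2.integrable_sq
  have hy1y2 : Integrable (fun ω => y1 ω * y2 ω) P := hy1.integrable_mul hy2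
  have hEx1 : Integrable (fun ω => (P[x1|G]) ω * x1 ω) P :=
    (hx1.condExp one_le_two).integrable_mul hx1
  have hEy2 : Integrable (fun ω => (P[y2|G]) ω * y2 ω) P :=
    (hy2.condExp one_le_two).integrable_mul hy2
  simp (disch := fun_prop) only [mul_assoc, integral_add, integral_sub, integral_const_mul]
  have hβ₁ : β ≤ κf ^ 2 / c12 + κg ^ 2 / c22 - κf * κe / c12 := min_le_left _ _
  have hβ₂ : β ≤ 2 * η + ν + κe ^ 2 / c12 - κf * κe / c12 := min_le_right _ _
  have hcross := two_mul_integral_mul_le_integral_sq_add_integral_sq hy1 hy2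
  have hx1G := integral_condExp_mul_nonneg hG hx1
  have hy2G := integral_condExp_mul_le_integral_sq hG hy2
  have hX : 0 ≤ ∫ ω, x1 ω ^ 2 ∂P := integral_nonneg fun ω => sq_nonneg _
  have hY₁ : 0 ≤ ∫ ω, y1 ω ^ 2 ∂P := integral_nonneg fun ω => sq_nonneg _
  have hY₂ : 0 ≤ ∫ ω, y2 ω ^ 2 ∂P := integral_nonneg fun ω => sq_nonneg _
  have hc : 0 ≤ κf * κe / c12 := by positivity
  have hk₁ : 0 ≤ b * ((1 - γ) * Ak ^ 2) := mul_nonneg hb (mul_nonneg (by linarith) (sq_nonneg _))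
  have hk₂ : 0 ≤ b * (γ * Ak ^ 2) / 2 := by positivity
  linarith [mul_nonneg (sub_nonneg.2 hβ₁) hY₁, mul_nonneg (sub_nonneg.2 hβ₂) hY₂,
    mul_le_mul_of_nonneg_left hcross hc, mul_le_mul_of_nonneg_left hy2G hν.le,
    mul_nonneg hk₁ hX, mul_nonneg hk₂ hx1G]

/-- **Monotonicity condition for the Peng–Wu continuation method.**
For all square-integrable real random variables `x̂₁, ŷ₁, ŷ₂` one has
`E[−b(1−γ)A_k² x̂₁² − (bγA_k²/2)·E[x̂₁|G]·x̂₁ − (κ_f²/c₁₂ + κ_g²/c₂₂) ŷ₁²`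
`  + 2(κ_f κ_e/c₁₂) ŷ₁ ŷ₂ − (2(η+ν) + κ_e²/c₁₂) ŷ₂² + ν·E[ŷ₂|G]·ŷ₂]`
`≤ −β₂ · E[ŷ₁² + ŷ₂²]`, where
`β₂ := min(κ_f²/c₁₂ + κ_g²/c₂₂ − κ_f κ_e/c₁₂, 2η + ν + κ_e²/c₁₂ − κ_f κ_e/c₁₂) > 0`. -/
theorem stmt_2
    {Ω : Type*} [mΩ : MeasurableSpace Ω] (P : Measure Ω) [IsProbabilityMeasure P]
    (G : MeasurableSpace Ω) (hG : G ≤ mΩ)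
    (b γ Ak κf κg κe c12 c22 η ν : ℝ)
    (hb : 0 ≤ b) (hγ0 : 0 ≤ γ) (hγ1 : γ ≤ 1) (hAk : 0 < Ak)
    (hκf : 0 < κf) (hκg : 0 < κg) (hκe : 0 < κe)
    (hc12 : 0 < c12) (hc22 : 0 < c22) (hη : 0 < η) (hν : 0 < ν)
    (hstruct1 : 0 < κf ^ 2 / c12 + κg ^ 2 / c22 - κf * κe / c12)
    (hstruct2 : 0 < 2 * η + ν + κe ^ 2 / c12 - κf * κe / c12)
    (x1 y1 y2 : Ω → ℝ)
    (hx1 : MemLp x1 2 P) (hy1 : MemLp y1 2 P) (hy2 : MemLp y2 2 P) :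
    0 < min (κf ^ 2 / c12 + κg ^ 2 / c22 - κf * κe / c12)
        (2 * η + ν + κe ^ 2 / c12 - κf * κe / c12) ∧
    ∫ ω, (-(b * (1 - γ) * Ak ^ 2) * (x1 ω) ^ 2
        - b * γ * Ak ^ 2 / 2 * ((P[x1 | G]) ω) * x1 ω
        - (κf ^ 2 / c12 + κg ^ 2 / c22) * (y1 ω) ^ 2
        + 2 * (κf * κe / c12) * (y1 ω) * (y2 ω)
        - (2 * (η + ν) + κe ^ 2 / c12) * (y2 ω) ^ 2
        + ν * ((P[y2 | G]) ω) * (y2 ω)) ∂P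
      ≤ - min (κf ^ 2 / c12 + κg ^ 2 / c22 - κf * κe / c12)
            (2 * η + ν + κe ^ 2 / c12 - κf * κe / c12)
          * ∫ ω, ((y1 ω) ^ 2 + (y2 ω) ^ 2) ∂P :=
  stmt_2_general (mΩ := mΩ) P G hG b γ Ak κf κg κe c12 c22 η ν hb hγ0 hγ1 hκf hκe hc12 hν hstruct1
    hstruct2 x1 y1 y2 hx1 hy1 hy2
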